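/- arXiv:1502.06903 — 5 statements merged into one kernel-verified Lean document; each statement's English description precedes it below -/
import Mathlib

section
/- For every real q > 0 that is not an integer, every integer m, and every real x with (2m−1)π < x < (2m+1)π, the series Σ_{N=1}^{∞} (−1)^N e^{−iNx}/(N − q) converges and equals −π·e^{iq(2mπ − x)}/sin(qπ) + Σ_{N=0}^{∞} (−1)^N e^{iNx}/(N + q), where the second series also converges. -/
/-!
For `a = 2mπ` and the kernel `D_M(u) = ∑_{-M ≤ n < M} e^{inu}`, integrating over the period
`[x - π, x + π]` gives `∫ e^{i(q+n)u} du = 2 sin(qπ) e^{iqx} (-1)^n e^{inx} / (n + q)`, so the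
symmetric partial sums `S_M = ∑_{-M ≤ n < M} (-1)^n e^{inx} / (n + q)` satisfy
`2 sin(qπ) e^{iqx} S_M = e^{iqa} ∫ D_M + ∫ (e^{iqu} - e^{iqa}) D_M(u) du`.
The first integral is `2π`. Since `(e^{iu} - 1) D_M(u) = e^{iMu} - e^{-iMu}`, the second equals
`∫ g(u) (e^{iMu} - e^{-iMu}) du` with `g = (e^{iqu} - e^{iqa}) / (e^{iu} - 1)`, which has a removable
singularity at `a` and no other pole on the interval; by Riemann–Lebesgue it tends to `0`.
Hence `S_M → π e^{iq(a - x)} / sin(qπ)`. The series `∑_{N ≥ 0} z^N / (N + q)` with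
`z = -e^{ix} ≠ 1` converges by Dirichlet's test, and the second series is its difference with `S_M`.
-/

open Filter Topology Finset Complex MeasureTheory
open scoped Real

theorem sum_Ico_neg_succ {β : Type*} [AddCommMonoid β] (f : ℤ → β) (M : ℕ) :
    ∑ n ∈ Ico (-((M + 1 : ℕ) : ℤ)) (M + 1 : ℕ), f n
      = ∑ n ∈ Ico (-(M : ℤ)) M, f n + f M + f (-(M + 1 : ℕ)) := by
  have hM : Ico (-((M + 1 : ℕ) : ℤ)) (M + 1 : ℕ)
      = insert (-((M + 1 : ℕ) : ℤ)) (insert (M : ℤ) (Ico (-(M : ℤ)) M)) := by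
    ext n
    simp only [mem_Ico, mem_insert]
    omega
  rw [hM, sum_insert (by simp only [mem_Ico, mem_insert]; omega),
    sum_insert (by simp only [mem_Ico]; omega)]
  abel

theorem sum_Ico_neg_eq_sum_range_add_sum_Icc {β : Type*} [AddCommMonoid β] (f : ℤ → β) (M : ℕ) :
    ∑ n ∈ Ico (-(M : ℤ)) M, f n = ∑ N ∈ range M, f N + ∑ N ∈ Icc 1 M, f (-N) := by
  induction M with
  | zero => simp
  | succ M ih =>
    rw [sum_Ico_neg_succ, ih, sum_range_succ, sum_Icc_succ_top (by omega)]
    abel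

theorem sub_one_mul_sum_Ico_neg_zpow {K : Type*} [Field K] {w : K} (hw : w ≠ 0) (M : ℕ) :
    (w - 1) * ∑ n ∈ Ico (-(M : ℤ)) M, w ^ n = w ^ (M : ℤ) - w ^ (-(M : ℤ)) := by
  induction M with
  | zero => simp
  | succ M ih =>
    rw [sum_Ico_neg_succ, mul_add, mul_add, ih]
    push_cast
    rw [zpow_add_one₀ hw, zpow_neg, zpow_neg, zpow_add_one₀ hw]
    field_simp
    ring

theorem exp_I_mul_two_mul_intCast_mul_pi (m : ℤ) : cexp (I * (2 * m * π : ℝ)) = 1 := by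
  push_cast
  rw [show I * (2 * m * π) = m * (2 * π * I) by ring, exp_int_mul_two_pi_mul_I]

theorem eq_of_exp_I_mul_eq_exp_I_mul {u v : ℝ} (huv : |u - v| < 2 * π)
    (h : cexp (I * u) = cexp (I * v)) : u = v := by
  obtain ⟨k, hk⟩ := exp_eq_exp_iff_exists_int.1 h
  have hku : u = v + k * (2 * π) := by simpa using congrArg Complex.im hk
  rw [hku, add_sub_cancel_left, abs_mul, abs_of_pos Real.two_pi_pos, mul_lt_iff_lt_one_left
    Real.two_pi_pos, ← Int.cast_abs, ← Int.cast_one, Int.cast_lt, Int.abs_lt_one_iff] at huv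
  simp [hku, huv]

theorem exp_I_mul_ne_neg_one {m : ℤ} {x : ℝ} (hx : |x - 2 * m * π| < π) : cexp (I * x) ≠ -1 := by
  intro h
  have hπ : cexp (I * (2 * m * π + π : ℝ)) = -1 := by
    rw [ofReal_add, mul_add, Complex.exp_add, exp_I_mul_two_mul_intCast_mul_pi, mul_comm I,
      exp_pi_mul_I, one_mul]
  rw [abs_lt] at hx
  have := eq_of_exp_I_mul_eq_exp_I_mul (abs_lt.2 ⟨by linarith, by linarith⟩) (h.trans hπ.symm)
  linarith

theorem integral_exp_I_mul_period (c : ℂ) (hc : c ≠ 0) (x : ℝ) :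
    ∫ u in (x - π)..(x + π), cexp (I * c * u) = 2 * Complex.sin (c * π) / c * cexp (I * c * x) := by
  have hshift (s : ℂ) : cexp (I * c * (x + s)) = cexp (I * c * x) * cexp (c * s * I) := by
    rw [← Complex.exp_add]
    ring_nf
  rw [integral_exp_mul_complex (mul_ne_zero I_ne_zero hc), Complex.sin]
  push_cast
  rw [sub_eq_add_neg (x : ℂ), hshift, hshift, neg_mul_eq_mul_neg]
  field_simp
  linear_combination (cexp (I * c * π) - cexp (-(I * c * π))) * I_sq

theorem integral_exp_I_mul_mul_exp_I_intCast_mul (q : ℂ) (n : ℤ) (hqn : q + n ≠ 0) (x : ℝ) :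
    ∫ u in (x - π)..(x + π), cexp (I * q * u) * cexp (I * n * u)
      = 2 * Complex.sin (q * π) * cexp (I * q * x) * ((-1) ^ n * cexp (I * n * x) / (n + q)) := by
  simp_rw [← Complex.exp_add, ← add_mul, ← mul_add]
  have hcos : Complex.cos (n * π) = (-1) ^ n := by
    rw [← ofReal_intCast, ← ofReal_mul, ← ofReal_cos, Real.cos_int_mul_pi]
    push_cast
    rfl
  rw [integral_exp_I_mul_period _ hqn, add_mul, Complex.sin_add, sin_int_mul_pi, hcos,
    mul_add I, add_mul, Complex.exp_add, add_comm (n : ℂ)]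
  ring

theorem integral_sum_Ico_exp_I_mul (x : ℝ) {M : ℕ} (hM : 1 ≤ M) :
    ∫ u in (x - π)..(x + π), ∑ n ∈ Ico (-(M : ℤ)) M, cexp (I * n * u) = 2 * π := by
  rw [intervalIntegral.integral_finsetSum
      fun n _ => (by fun_prop : Continuous _).intervalIntegrable _ _,
    sum_eq_single_of_mem 0 (by simp only [mem_Ico]; omega)]
  · simp only [Int.cast_zero, mul_zero, zero_mul, Complex.exp_zero, intervalIntegral.integral_const,
      real_smul, mul_one]
    push_cast
    ring
  · intro n _ hn
    rw [integral_exp_I_mul_period _ (by exact_mod_cast hn), sin_int_mul_pi]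
    simp

theorem mul_sum_Ico_eq_integral (q : ℂ) (hq : ∀ n : ℤ, q ≠ n) (x : ℝ) (M : ℕ) :
    2 * Complex.sin (q * π) * cexp (I * q * x)
        * ∑ n ∈ Ico (-(M : ℤ)) M, (-1) ^ n * cexp (I * n * x) / (n + q)
      = ∫ u in (x - π)..(x + π), cexp (I * q * u) * ∑ n ∈ Ico (-(M : ℤ)) M, cexp (I * n * u) := by
  simp_rw [mul_sum]
  rw [intervalIntegral.integral_finsetSum
    fun n _ => (by fun_prop : Continuous _).intervalIntegrable _ _]
  refine sum_congr rfl fun n _ => ?_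
  rw [integral_exp_I_mul_mul_exp_I_intCast_mul q n
    (fun h => hq (-n) (by push_cast; linear_combination h)) x]

theorem Differentiable.continuous_dslope {𝕜 E : Type*} [NontriviallyNormedField 𝕜]
    [NormedAddCommGroup E] [NormedSpace 𝕜 E] {f : 𝕜 → E} (hf : Differentiable 𝕜 f) (a : 𝕜) :
    Continuous (dslope f a) :=
  continuousOn_univ.1 ((continuousOn_dslope univ_mem).2 ⟨hf.continuous.continuousOn, hf a⟩)

theorem dslope_exp_I_mul_ne_zero {a u : ℝ} (hu : |u - a| < 2 * π) :
    dslope (fun v : ℝ => cexp (I * v)) a u ≠ 0 := by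
  rcases eq_or_ne u a with rfl | hne
  · have hderiv : HasDerivAt (fun v : ℝ => cexp (I * v)) (cexp (I * u) * (I * 1)) u :=
      ((hasDerivAt_id _).ofReal_comp.const_mul I).cexp
    rw [dslope_same, hderiv.deriv]
    simp [Complex.exp_ne_zero]
  · rw [dslope_of_ne _ hne, slope_def_module, smul_ne_zero_iff, Ne, inv_eq_zero, ← Ne,
      sub_ne_zero, sub_ne_zero]
    exact ⟨hne, fun h => hne (eq_of_exp_I_mul_eq_exp_I_mul hu h)⟩

theorem sub_mul_sum_Ico_exp_I_mul_eq (q : ℂ) (m : ℤ) (M : ℕ) {u : ℝ}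
    (hu : dslope (fun v : ℝ => cexp (I * v)) (2 * m * π) u ≠ 0) :
    (cexp (I * q * u) - cexp (I * q * (2 * m * π : ℝ))) * ∑ n ∈ Ico (-(M : ℤ)) M, cexp (I * n * u)
      = dslope (fun v : ℝ => cexp (I * q * v)) (2 * m * π) u
          / dslope (fun v : ℝ => cexp (I * v)) (2 * m * π) u
          * (cexp (I * M * u) - cexp (I * (-M : ℝ) * u)) := by
  have hA := sub_smul_dslope (fun v : ℝ => cexp (I * q * v)) (2 * m * π) u
  have hB := sub_smul_dslope (fun v : ℝ => cexp (I * v)) (2 * m * π) u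
  have hD := sub_one_mul_sum_Ico_neg_zpow (Complex.exp_ne_zero (I * u)) M
  simp only [exp_I_mul_two_mul_intCast_mul_pi, Complex.real_smul] at hA hB
  simp only [← Complex.exp_int_mul, ← mul_assoc, mul_comm _ I] at hD
  push_cast at hA hB hD ⊢
  rw [← hA, ← hD, ← hB]
  field_simp

/-- This holds for every `g`: if `g` is not integrable on `[a, b]`, all these integrals are `0`. -/
theorem tendsto_intervalIntegral_mul_exp_I_mul_cocompact (g : ℝ → ℂ) {a b : ℝ} (hab : a ≤ b) :
    Tendsto (fun w : ℝ => ∫ u in a..b, g u * cexp (I * w * u)) (cocompact ℝ) (𝓝 0) := by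
  have hRL := (Real.tendsto_integral_exp_smul_cocompact ((Set.Ioc a b).indicator g)).comp
    (tendsto_cocompact_mul_left₀ (inv_ne_zero (neg_ne_zero.2 Real.two_pi_pos.ne')))
  refine hRL.congr fun w => ?_
  rw [intervalIntegral.integral_of_le hab, ← integral_indicator measurableSet_Ioc]
  refine integral_congr_ae (Eventually.of_forall fun u => ?_)
  simp only [Circle.smul_def, Real.fourierChar_apply, smul_eq_mul]
  by_cases hu : u ∈ Set.Ioc a b
  · rw [Set.indicator_of_mem hu, Set.indicator_of_mem hu, mul_comm]
    congr 2
    push_cast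
    field_simp
  · simp [Set.indicator_of_notMem hu]

theorem tendsto_integral_sub_mul_sum_Ico_exp_I_mul (q : ℂ) (m : ℤ) {x : ℝ}
    (hx : |x - 2 * m * π| < π) :
    Tendsto (fun M : ℕ => ∫ u in (x - π)..(x + π),
      (cexp (I * q * u) - cexp (I * q * (2 * m * π : ℝ))) * ∑ n ∈ Ico (-(M : ℤ)) M, cexp (I * n * u))
      atTop (𝓝 0) := by
  -- the continuous extension of `(e^{iqu} - e^{2πimq}) / (e^{iu} - 1)` across `u = 2πm`
  set G : ℝ → ℂ := fun u => dslope (fun v : ℝ => cexp (I * q * v)) (2 * m * π) u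
    / dslope (fun v : ℝ => cexp (I * v)) (2 * m * π) u
  have hB : ∀ u ∈ Set.uIcc (x - π) (x + π),
      dslope (fun v : ℝ => cexp (I * v)) (2 * m * π) u ≠ 0 := by
    intro u hu
    rw [Set.uIcc_of_le (by linarith [Real.pi_pos])] at hu
    rw [abs_lt] at hx
    exact dslope_exp_I_mul_ne_zero (abs_lt.2 ⟨by linarith [hu.1], by linarith [hu.2]⟩)
  have hG : ContinuousOn G (Set.uIcc (x - π) (x + π)) :=
    ((Differentiable.continuous_dslope (by fun_prop) _).continuousOn).div
      (Differentiable.continuous_dslope (by fun_prop) _).continuousOn hB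
  have hGi (w : ℝ) : IntervalIntegrable (fun u => G u * cexp (I * w * u)) volume (x - π) (x + π) :=
    (hG.mul (by fun_prop)).intervalIntegrable
  have hRL := tendsto_intervalIntegral_mul_exp_I_mul_cocompact G
    (by linarith [Real.pi_pos] : x - π ≤ x + π)
  have hpos := hRL.comp (tendsto_natCast_atTop_atTop.mono_right atTop_le_cocompact)
  have hneg := hRL.comp
    ((tendsto_neg_atTop_atBot.comp tendsto_natCast_atTop_atTop).mono_right atBot_le_cocompact)
  rw [← sub_zero (0 : ℂ)]
  refine (hpos.sub hneg).congr fun M => ?_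
  simp only [Function.comp_apply]
  rw [← intervalIntegral.integral_sub (hGi _) (hGi _)]
  refine intervalIntegral.integral_congr fun u hu => ?_
  simp only [sub_mul_sum_Ico_exp_I_mul_eq q m M (hB u hu), G, mul_sub, ofReal_natCast]

theorem tendsto_sum_Ico_neg_one_zpow_mul_exp_div (q : ℂ) (hq : ∀ n : ℤ, q ≠ n) (m : ℤ) {x : ℝ}
    (hx : |x - 2 * m * π| < π) :
    Tendsto (fun M : ℕ => ∑ n ∈ Ico (-(M : ℤ)) M, (-1) ^ n * cexp (I * n * x) / (n + q)) atTop
      (𝓝 (π * cexp (I * q * (2 * m * π - x : ℝ)) / Complex.sin (q * π))) := by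
  have hsin : Complex.sin (q * π) ≠ 0 := by
    rw [Ne, Complex.sin_eq_zero_iff]
    rintro ⟨k, hk⟩
    exact hq k (mul_right_cancel₀ (ofReal_ne_zero.2 Real.pi_ne_zero) hk)
  set c := 2 * Complex.sin (q * π) * cexp (I * q * x)
  have hc : c ≠ 0 := mul_ne_zero (mul_ne_zero two_ne_zero hsin) (Complex.exp_ne_zero _)
  have hlim : Tendsto
      (fun M : ℕ => c * ∑ n ∈ Ico (-(M : ℤ)) M, (-1) ^ n * cexp (I * n * x) / (n + q))
      atTop (𝓝 (0 + cexp (I * q * (2 * m * π : ℝ)) * (2 * π))) := by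
    refine ((tendsto_integral_sub_mul_sum_Ico_exp_I_mul q m hx).add_const _).congr' ?_
    filter_upwards [eventually_ge_atTop 1] with M hM
    rw [mul_sum_Ico_eq_integral q hq x M, ← integral_sum_Ico_exp_I_mul x hM,
      ← intervalIntegral.integral_const_mul, ← intervalIntegral.integral_add
        ((by fun_prop : Continuous _).intervalIntegrable _ _)
        ((by fun_prop : Continuous _).intervalIntegrable _ _)]
    congr 1 with u
    ring
  convert hlim.const_mul c⁻¹ using 1
  · simp [inv_mul_cancel_left₀ hc]
  · rw [zero_add, ofReal_sub, mul_sub, Complex.exp_sub]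
    congr 1
    simp only [c]
    field_simp

theorem cauchySeq_sum_range_pow_div_add {z : ℂ} (hz : ‖z‖ = 1) (hz1 : z ≠ 1) {q : ℝ}
    (hq : 0 < q) : CauchySeq fun M : ℕ => ∑ N ∈ range M, z ^ N / (N + q) := by
  have hanti : Antitone fun N : ℕ => (N + q)⁻¹ := fun a b hab =>
    inv_anti₀ (by positivity) (by gcongr)
  have hzero : Tendsto (fun N : ℕ => (N + q)⁻¹) atTop (𝓝 0) :=
    (tendsto_atTop_add_const_right _ q tendsto_natCast_atTop_atTop).inv_tendsto_atTop
  have hbdd (M : ℕ) : ‖∑ N ∈ range M, z ^ N‖ ≤ 2 / ‖z - 1‖ := by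
    rw [geom_sum_eq hz1, norm_div]
    gcongr
    calc ‖z ^ M - 1‖ ≤ ‖z ^ M‖ + ‖(1 : ℂ)‖ := norm_sub_le _ _
      _ = 2 := by rw [norm_pow, hz, one_pow, norm_one]; norm_num
  convert hanti.cauchySeq_series_mul_of_tendsto_zero_of_bounded hzero hbdd using 3 with M N
  rw [Complex.real_smul, div_eq_inv_mul]
  push_cast
  rfl

/-- Equation (30): for non-integer `q > 0` and `(2m−1)π < x < (2m+1)π`,
`Σ_{N=1}^∞ (−1)^N e^{−iNx}/(N − q) = −π e^{iq(2mπ − x)}/sin(qπ) + Σ_{N=0}^∞ (−1)^N e^{iNx}/(N + q)`,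
both series converging (in the sense of partial sums). -/
theorem statement2 (q : ℝ) (hq : 0 < q) (hqi : ∀ n : ℤ, q ≠ (n : ℝ))
    (m : ℤ) (x : ℝ) (hx1 : (2 * (m : ℝ) - 1) * Real.pi < x)
    (hx2 : x < (2 * (m : ℝ) + 1) * Real.pi) :
    ∃ L : ℂ,
      Tendsto (fun M : ℕ => ∑ N ∈ Finset.range M,
          (-1 : ℂ) ^ N * Complex.exp (Complex.I * (N : ℂ) * (x : ℂ)) / ((N : ℂ) + (q : ℂ)))
        atTop (nhds L) ∧
      Tendsto (fun M : ℕ => ∑ N ∈ Finset.Icc 1 M,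
          (-1 : ℂ) ^ N * Complex.exp (-Complex.I * (N : ℂ) * (x : ℂ)) / ((N : ℂ) - (q : ℂ)))
        atTop
        (nhds (-(Real.pi : ℂ) *
            Complex.exp (Complex.I * (q : ℂ) * ((2 * (m : ℝ) * Real.pi - x : ℝ) : ℂ)) /
            Complex.sin ((q : ℂ) * (Real.pi : ℂ)) + L)) := by
  have hx : |x - 2 * m * π| < π := abs_sub_lt_iff.2 ⟨by linarith, by linarith⟩
  have hz : ‖-cexp (I * x)‖ = 1 := by rw [norm_neg, mul_comm, norm_exp_ofReal_mul_I]
  have hz1 : -cexp (I * x) ≠ 1 := fun h => exp_I_mul_ne_neg_one hx (by linear_combination -h)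
  obtain ⟨L, hL⟩ := cauchySeq_tendsto_of_complete (cauchySeq_sum_range_pow_div_add hz hz1 hq)
  have hpos : Tendsto (fun M : ℕ => ∑ N ∈ range M, (-1 : ℂ) ^ N * cexp (I * N * x) / (N + q))
      atTop (𝓝 L) := by
    refine hL.congr fun M => sum_congr rfl fun N _ => ?_
    rw [neg_pow, ← Complex.exp_nat_mul, ← mul_assoc, mul_comm (N : ℂ) I]
  refine ⟨L, hpos, ?_⟩
  have hsym := tendsto_sum_Ico_neg_one_zpow_mul_exp_div q (fun n => by exact_mod_cast hqi n) m hx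
  convert hpos.sub hsym using 1
  · funext M
    rw [sum_Ico_neg_eq_sum_range_add_sum_Icc]
    simp only [Int.cast_neg, Int.cast_natCast, zpow_neg, zpow_natCast]
    rw [sub_add_cancel_left, ← sum_neg_distrib]
    refine sum_congr rfl fun N _ => ?_
    rw [← inv_pow, inv_neg_one, show -(N : ℂ) + q = -(N - q) by ring, div_neg, neg_neg, mul_neg,
      neg_mul I]
  · congr 1
    ring
end

section
/- For every real q, every integer N₂ with N₂ > q, and every real x with e^{ix} ≠ −1, the series Σ_{N=N₂}^{∞} (−1)^N e^{−iNx}/(N − q) converges and equals (−1)^{N₂}·e^{−iN₂x}·∫_0^∞ e^{−(N₂−q)y}/(1 + e^{−ix}·e^{−y}) dy. -/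
/-!
Put `a = N₂ - q` and `u = -e^{-ix}`; the `k`-th term is `(-1)^{N₂} e^{-iN₂x} uᵏ / (a + k)`.
Since `1 / (a + k) = ∫₀^∞ e^{-(a+k)y} dy`, the `M`-th partial sum of `∑ uᵏ / (a + k)` is the
integral of `e^{-ay}` against the geometric sum `∑_{k<M} (u e^{-y})ᵏ`. For `‖u‖ ≤ 1`, `u ≠ 1`
these geometric sums are bounded by `4 / ‖1 - u‖` uniformly in `M` and `y ≥ 0`, because
`‖1 - u‖ ≤ 2 ‖1 - u t‖` for `t ∈ [0, 1]`, so dominated convergence lets `M → ∞` under the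
integral, where they converge to `1 / (1 - u e^{-y})` for `y > 0`.
-/

open Filter MeasureTheory Set Complex

theorem norm_geom_sum_le_of_norm_le_one {𝕜 : Type*} [NormedDivisionRing 𝕜] {v : 𝕜}
    (hv : ‖v‖ ≤ 1) (hv1 : v ≠ 1) (M : ℕ) :
    ‖∑ k ∈ Finset.range M, v ^ k‖ ≤ 2 / ‖1 - v‖ := by
  rw [geom_sum_eq hv1, norm_div, ← norm_neg (v - 1), neg_sub]
  gcongr
  calc ‖v ^ M - 1‖ ≤ ‖v ^ M‖ + ‖(1 : 𝕜)‖ := norm_sub_le _ _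
    _ ≤ 2 := by rw [norm_pow, norm_one]; linarith [pow_le_one₀ (n := M) (norm_nonneg v) hv]

theorem norm_one_sub_le_two_mul_norm_one_sub_mul {u : ℂ} (hu : ‖u‖ ≤ 1) {t : ℝ}
    (ht₀ : 0 ≤ t) (ht₁ : t ≤ 1) : ‖1 - u‖ ≤ 2 * ‖1 - u * t‖ := by
  have hut : 1 - t ≤ ‖1 - u * t‖ := by
    calc 1 - t ≤ ‖(1 : ℂ)‖ - ‖u * (t : ℂ)‖ := by
          rw [norm_one, norm_mul, Complex.norm_of_nonneg ht₀]; nlinarith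
      _ ≤ ‖1 - u * t‖ := norm_sub_norm_le _ _
  calc ‖1 - u‖ = ‖(1 - u * t) - u * (1 - t : ℝ)‖ := by push_cast; ring_nf
    _ ≤ ‖1 - u * t‖ + ‖u * (1 - t : ℝ)‖ := norm_sub_le _ _
    _ = ‖1 - u * t‖ + ‖u‖ * (1 - t) := by
        rw [norm_mul, Complex.norm_of_nonneg (sub_nonneg.2 ht₁)]
    _ ≤ 2 * ‖1 - u * t‖ := by nlinarith [norm_nonneg u]

theorem norm_geom_sum_mul_le {u : ℂ} (hu : ‖u‖ ≤ 1) (hu1 : u ≠ 1) {t : ℝ}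
    (ht₀ : 0 ≤ t) (ht₁ : t ≤ 1) (M : ℕ) :
    ‖∑ k ∈ Finset.range M, (u * t) ^ k‖ ≤ 4 / ‖1 - u‖ := by
  have hpos : 0 < ‖1 - u‖ := norm_pos_iff.2 (sub_ne_zero.2 hu1.symm)
  have hle := norm_one_sub_le_two_mul_norm_one_sub_mul hu ht₀ ht₁
  have hut : ‖u * t‖ ≤ 1 := by
    rw [norm_mul, Complex.norm_of_nonneg ht₀]; nlinarith [norm_nonneg u]
  have hut1 : u * t ≠ 1 := by
    rintro h; rw [h, sub_self, norm_zero] at hle; linarith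
  calc ‖∑ k ∈ Finset.range M, (u * t) ^ k‖ ≤ 2 / ‖1 - u * t‖ :=
        norm_geom_sum_le_of_norm_le_one hut hut1 M
    _ ≤ 4 / ‖1 - u‖ := by
        rw [div_le_div_iff₀ (by linarith) hpos]; linarith

section LaplaceRepresentation

variable {a : ℂ}

theorem integrableOn_exp_neg_mul_Ioi (ha : 0 < a.re) :
    IntegrableOn (fun y : ℝ => exp (-a * y)) (Ioi 0) :=
  integrableOn_exp_mul_complex_Ioi (by simpa using ha) 0

theorem integral_exp_neg_mul_Ioi (ha : 0 < a.re) :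
    ∫ y : ℝ in Ioi 0, exp (-a * y) = a⁻¹ := by
  rw [integral_exp_mul_complex_Ioi (by simpa using ha) 0]
  simp [div_neg, neg_div]

theorem exp_neg_mul_mul_pow (u : ℂ) (k : ℕ) (y : ℝ) :
    exp (-a * y) * (u * exp (-y)) ^ k = u ^ k * exp (-(a + k) * y) := by
  rw [mul_pow, ← Complex.exp_nat_mul, mul_left_comm, ← Complex.exp_add]
  ring_nf

theorem integral_exp_neg_mul_mul_pow (ha : 0 < a.re) (u : ℂ) (k : ℕ) :
    ∫ y : ℝ in Ioi 0, exp (-a * y) * (u * exp (-y)) ^ k = u ^ k / (a + k) := by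
  have hak : 0 < (a + k).re := by rw [add_re, natCast_re]; positivity
  simp_rw [exp_neg_mul_mul_pow, integral_const_mul, integral_exp_neg_mul_Ioi hak, div_eq_mul_inv]

theorem sum_pow_div_add_eq_integral (ha : 0 < a.re) (u : ℂ) (M : ℕ) :
    ∑ k ∈ Finset.range M, u ^ k / (a + k) =
      ∫ y : ℝ in Ioi 0, exp (-a * y) * ∑ k ∈ Finset.range M, (u * exp (-y)) ^ k := by
  have hint (k : ℕ) : IntegrableOn (fun y : ℝ => exp (-a * y) * (u * exp (-y)) ^ k) (Ioi 0) := by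
    have hak : 0 < (a + k).re := by rw [add_re, natCast_re]; positivity
    simpa only [IntegrableOn, exp_neg_mul_mul_pow] using
      (integrableOn_exp_neg_mul_Ioi hak).const_mul (u ^ k)
  simp_rw [Finset.mul_sum, integral_finsetSum _ fun k _ => hint k, integral_exp_neg_mul_mul_pow ha]

theorem tendsto_sum_pow_div_add_integral (ha : 0 < a.re) {u : ℂ} (hu : ‖u‖ ≤ 1) (hu1 : u ≠ 1) :
    Tendsto (fun M : ℕ => ∑ k ∈ Finset.range M, u ^ k / (a + k)) atTop
      (nhds (∫ y : ℝ in Ioi 0, exp (-a * y) / (1 - u * exp (-y)))) := by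
  simp_rw [sum_pow_div_add_eq_integral ha]
  have hexp (y : ℝ) : exp (-y) = (Real.exp (-y) : ℝ) := by push_cast; rfl
  refine tendsto_integral_of_dominated_convergence (fun y => 4 / ‖1 - u‖ * ‖exp (-a * y)‖)
    (fun M => ?_) ((integrableOn_exp_neg_mul_Ioi ha).norm.const_mul _) (fun M => ?_) ?_
  · exact (by fun_prop : Continuous _).aestronglyMeasurable
  · filter_upwards [ae_restrict_mem measurableSet_Ioi] with y hy
    rw [norm_mul, mul_comm, hexp]
    gcongr
    exact norm_geom_sum_mul_le hu hu1 (Real.exp_pos _).le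
      (Real.exp_le_one_iff.2 (neg_nonpos.2 (le_of_lt hy))) M
  · filter_upwards [ae_restrict_mem measurableSet_Ioi] with y hy
    have hlt : ‖u * exp (-y)‖ < 1 := by
      rw [norm_mul, hexp, Complex.norm_of_nonneg (Real.exp_pos _).le]
      calc ‖u‖ * Real.exp (-y) ≤ 1 * Real.exp (-y) := by gcongr
        _ < 1 := by rw [one_mul, Real.exp_lt_one_iff]; simpa using hy
    simpa [div_eq_mul_inv] using
      ((hasSum_geometric_of_norm_lt_one hlt).tendsto_sum_nat).const_mul (exp (-a * y))

end LaplaceRepresentation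

theorem alternating_term_eq (N₂ : ℤ) (q x : ℝ) (k : ℕ) :
    (-1 : ℂ) ^ (N₂ + (k : ℤ)) * exp (-I * ((N₂ + (k : ℤ) : ℤ) : ℂ) * x) /
        (((N₂ + (k : ℤ) : ℤ) : ℂ) - q) =
      (-1 : ℂ) ^ N₂ * exp (-I * N₂ * x) *
        ((-exp (-I * x)) ^ k / ((((N₂ : ℝ) - q : ℝ) : ℂ) + k)) := by
  have hexp : exp (-I * ((N₂ + (k : ℤ) : ℤ) : ℂ) * x) = exp (-I * N₂ * x) * exp (-I * x) ^ k := by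
    rw [← Complex.exp_nat_mul, ← Complex.exp_add]
    push_cast
    ring_nf
  have hden : (((N₂ + (k : ℤ) : ℤ) : ℂ) - q) = (((N₂ : ℝ) - q : ℝ) : ℂ) + k := by
    push_cast
    ring
  rw [zpow_add₀ (by norm_num), zpow_natCast, neg_pow (exp _), hexp, hden]
  ring

/-- Equation (35): for `N₂ > q` and `e^{ix} ≠ −1`,
`Σ_{N=N₂}^∞ (−1)^N e^{−iNx}/(N − q) = (−1)^{N₂} e^{−iN₂x} ∫₀^∞ e^{−(N₂−q)y}/(1 + e^{−ix}e^{−y}) dy`. -/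
theorem statement3 (q : ℝ) (N₂ : ℤ) (hN : q < (N₂ : ℝ)) (x : ℝ)
    (hx : Complex.exp (Complex.I * (x : ℂ)) ≠ -1) :
    Tendsto (fun M : ℕ => ∑ k ∈ Finset.range M,
        (-1 : ℂ) ^ (N₂ + (k : ℤ)) *
          Complex.exp (-Complex.I * ((N₂ + (k : ℤ) : ℤ) : ℂ) * (x : ℂ)) /
          (((N₂ + (k : ℤ) : ℤ) : ℂ) - (q : ℂ)))
      atTop
      (nhds ((-1 : ℂ) ^ N₂ * Complex.exp (-Complex.I * (N₂ : ℂ) * (x : ℂ)) *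
        ∫ y in Set.Ioi (0 : ℝ),
          Complex.exp (-((((N₂ : ℝ) - q) : ℝ) : ℂ) * (y : ℂ)) /
            (1 + Complex.exp (-Complex.I * (x : ℂ)) * Complex.exp (-(y : ℂ))))) := by
  have ha : 0 < ((((N₂ : ℝ) - q : ℝ)) : ℂ).re := by simpa using hN
  have hnorm : ‖-exp (-I * x)‖ ≤ 1 := by simp [norm_exp]
  have hne : -exp (-I * x) ≠ 1 := by
    intro h
    apply hx
    rw [show I * x = -(-I * x) by ring, Complex.exp_neg, show exp (-I * x) = -1 by
      linear_combination -h]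
    norm_num
  have hlim := (tendsto_sum_pow_div_add_integral ha hnorm hne).const_mul
    ((-1 : ℂ) ^ N₂ * exp (-I * N₂ * x))
  simp only [neg_mul (exp _), sub_neg_eq_add] at hlim
  simpa only [alternating_term_eq, ← Finset.mul_sum] using hlim
end

section
/- For every integer M ≥ 3: Σ_{p=2}^{M} 2^{2p−1}/((1 − 2^{−p})^{1/2}·(1 − 2^{−p−1})³) < 0.87·4^M. -/
/-!
Induction on `M`. For `p ≥ 4` the correction factors are close to `1`
(`√(1 - 2⁻ᵖ) ≥ 0.968`, `1 - 2⁻ᵖ⁻¹ ≥ 31/32`), so the `p`-th summand is at most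
`2.3 · 4ᵖ⁻¹`, less than the increment `3 · 0.87 · 4ᵖ⁻¹` of the right-hand side.
The base case `M = 3` is a numerical check of the two summands `p = 2, 3`.
-/

open Finset

noncomputable def summand (p : ℕ) : ℝ :=
  (2 : ℝ) ^ (2 * p - 1) /
    (Real.sqrt (1 - ((2 : ℝ) ^ p)⁻¹) * (1 - ((2 : ℝ) ^ (p + 1))⁻¹) ^ 3)

lemma one_sub_inv_two_pow_le {k n : ℕ} (h : k ≤ n) :
    1 - ((2 : ℝ) ^ k)⁻¹ ≤ 1 - ((2 : ℝ) ^ n)⁻¹ := by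
  gcongr
  norm_num

lemma summand_le {p : ℕ} {r s : ℝ} (hr : 0 < r) (hr2 : r ^ 2 ≤ 1 - ((2 : ℝ) ^ p)⁻¹)
    (hs : 0 < s) (hs1 : s ≤ 1 - ((2 : ℝ) ^ (p + 1))⁻¹) :
    summand p ≤ (2 : ℝ) ^ (2 * p - 1) / (r * s ^ 3) := by
  have hr_sqrt : r ≤ Real.sqrt (1 - ((2 : ℝ) ^ p)⁻¹) := (Real.le_sqrt' hr).mpr hr2
  unfold summand
  gcongr

lemma summand_two_add_summand_three_lt : summand 2 + summand 3 < 0.87 * 4 ^ 3 := by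
  have h2 := summand_le (p := 2) (r := 0.866) (s := 7 / 8)
    (by norm_num) (by norm_num) (by norm_num) (by norm_num)
  have h3 := summand_le (p := 3) (r := 0.935) (s := 15 / 16)
    (by norm_num) (by norm_num) (by norm_num) (by norm_num)
  norm_num at h2 h3 ⊢
  linarith

lemma summand_succ_le {p : ℕ} (hp : 3 ≤ p) : summand (p + 1) ≤ 23 / 10 * 4 ^ p := by
  have hr : (0.968 : ℝ) ^ 2 ≤ 1 - ((2 : ℝ) ^ (p + 1))⁻¹ :=
    calc (0.968 : ℝ) ^ 2 ≤ 1 - ((2 : ℝ) ^ 4)⁻¹ := by norm_num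
      _ ≤ _ := one_sub_inv_two_pow_le (by omega)
  have hs : (31 / 32 : ℝ) ≤ 1 - ((2 : ℝ) ^ (p + 1 + 1))⁻¹ :=
    calc (31 / 32 : ℝ) = 1 - ((2 : ℝ) ^ 5)⁻¹ := by norm_num
      _ ≤ _ := one_sub_inv_two_pow_le (by omega)
  have hpow : (2 : ℝ) ^ (2 * (p + 1) - 1) = 2 * 4 ^ p := by
    rw [show 2 * (p + 1) - 1 = 2 * p + 1 by omega, pow_succ, pow_mul]
    norm_num [mul_comm]
  calc summand (p + 1) ≤ (2 : ℝ) ^ (2 * (p + 1) - 1) / (0.968 * (31 / 32) ^ 3) :=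
        summand_le (by norm_num) hr (by norm_num) hs
    _ = 8192000 / 3604711 * 4 ^ p := by rw [hpow]; ring
    _ ≤ 23 / 10 * 4 ^ p := mul_le_mul_of_nonneg_right (by norm_num) (by positivity)

/-- Equation (43): for every `M ≥ 3`,
`Σ_{p=2}^{M} 2^{2p−1}/((1 − 2^{−p})^{1/2}·(1 − 2^{−p−1})³) < 0.87·4^M`. -/
theorem statement5 (M : ℕ) (hM : 3 ≤ M) :
    ∑ p ∈ Finset.Icc 2 M,
        (2 : ℝ) ^ (2 * p - 1) /
          (Real.sqrt (1 - ((2 : ℝ) ^ p)⁻¹) * (1 - ((2 : ℝ) ^ (p + 1))⁻¹) ^ 3)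
      < 0.87 * 4 ^ M := by
  change ∑ p ∈ Icc 2 M, summand p < 0.87 * 4 ^ M
  induction M, hM using Nat.le_induction with
  | base =>
    rw [show Icc 2 3 = {2, 3} from rfl, sum_pair (by norm_num)]
    exact summand_two_add_summand_three_lt
  | succ M hM ih =>
    rw [sum_Icc_succ_top (by omega), pow_succ]
    have := summand_succ_le hM
    have : (0 : ℝ) < 4 ^ M := by positivity
    linarith
end

section
/- For every real s > 0, the series Σ_{k=0}^{∞} e^{iπk(k+1)/2}·e^{−(2k+1)s} converges absolutely and equals sinh(s)/cosh(2s); equivalently, Σ over odd positive integers α of (−1)^{(α−1)/2}·e^{−iπα/2}·e^{iπα²/8}·e^{−αs} = −i·e^{iπ/8}·sinh(s)/cosh(2s). -/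
/-!
The phase `e^{iπk(k+1)/2}` runs through `1, -1, -1, 1, …`: it changes sign under `k ↦ k + 2`.
Splitting the series into even and odd `k` therefore leaves two geometric series in `-e^{-4s}`,
with total `e^{-s}(1 - e^{-2s}) / (1 + e^{-4s}) = sinh s / cosh 2s`. The second series is the
first one times `-i e^{iπ/8}`, because `α²/8 = k(k+1)/2 + 1/8` and `(-1)^k e^{-iπα/2} = -i`.
-/

open Complex

theorem hasSum_mul_pow_of_antiperiodic {K : Type*} [NormedField K] {a : ℕ → K}
    (ha : Function.Antiperiodic a 2) {z : K} (hz : ‖z‖ < 1) :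
    HasSum (fun k => a k * z ^ k) ((a 0 + a 1 * z) / (1 + z ^ 2)) := by
  have hgeom : HasSum (fun m : ℕ => (-z ^ 2) ^ m) (1 + z ^ 2)⁻¹ := by
    have hz2 : ‖-z ^ 2‖ < 1 := by
      rw [norm_neg, norm_pow]; exact pow_lt_one₀ (norm_nonneg z) hz two_ne_zero
    simpa only [sub_neg_eq_add] using hasSum_geometric_of_norm_lt_one hz2
  have hshift (m j : ℕ) : a (j + 2 * m) = (-1) ^ m * a j := by
    simpa only [Nat.cast_id, mul_comm] using ha.add_nat_mul_eq (x := j) m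
  have heven (m : ℕ) : a (2 * m) * z ^ (2 * m) = a 0 * (-z ^ 2) ^ m := by
    rw [← zero_add (2 * m), hshift, zero_add, neg_pow, pow_mul]; ring
  have hodd (m : ℕ) : a (2 * m + 1) * z ^ (2 * m + 1) = a 1 * z * (-z ^ 2) ^ m := by
    rw [add_comm (2 * m), hshift, neg_pow, pow_add, pow_mul]; ring
  rw [add_div, div_eq_mul_inv, div_eq_mul_inv]
  exact .even_add_odd (by simpa only [heven] using hgeom.mul_left (a 0))
    (by simpa only [hodd] using hgeom.mul_left (a 1 * z))

theorem exp_I_mul_pi_triangular_antiperiodic :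
    Function.Antiperiodic (fun k : ℕ => exp (I * ((Real.pi * k * (k + 1) / 2 : ℝ) : ℂ))) 2 := by
  intro k
  dsimp only
  have harg : I * ((Real.pi * ↑(k + 2) * (↑(k + 2) + 1) / 2 : ℝ) : ℂ)
      = I * ((Real.pi * k * (k + 1) / 2 : ℝ) : ℂ) + ↑(2 * k + 3) * (Real.pi * I) := by
    push_cast; ring
  rw [harg, exp_add, exp_nat_mul, exp_pi_mul_I, Odd.neg_one_pow ⟨k + 1, by ring⟩, mul_neg_one]

theorem Real.sinh_div_cosh_two_mul (s : ℝ) :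
    Real.sinh s / Real.cosh (2 * s) =
      Real.exp (-s) * (1 - Real.exp (-s) ^ 2) / (1 + (Real.exp (-s) ^ 2) ^ 2) := by
  have hs : Real.exp s = (Real.exp (-s))⁻¹ := by rw [Real.exp_neg, inv_inv]
  rw [Real.sinh_eq, Real.cosh_eq, two_mul, neg_add, Real.exp_add, Real.exp_add, hs]
  field_simp

theorem Real.exp_neg_two_mul_add_one_mul (s : ℝ) (k : ℕ) :
    Real.exp (-(2 * k + 1) * s) = Real.exp (-s) * (Real.exp (-s) ^ 2) ^ k := by
  rw [← pow_mul, ← Real.exp_nat_mul, ← Real.exp_add]; push_cast; ring_nf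

theorem Real.exp_neg_sq_lt_one {s : ℝ} (hs : 0 < s) : Real.exp (-s) ^ 2 < 1 := by
  rw [← Real.exp_nat_mul, Real.exp_lt_one_iff, Nat.cast_ofNat]
  linarith

theorem hasSum_exp_I_mul_pi_triangular_mul_exp {s : ℝ} (hs : 0 < s) :
    HasSum (fun k : ℕ => exp (I * ((Real.pi * k * (k + 1) / 2 : ℝ) : ℂ)) *
        exp (((-((2 * k + 1 : ℝ)) * s : ℝ)) : ℂ))
      ((Real.sinh s / Real.cosh (2 * s) : ℝ) : ℂ) := by
  set y := Real.exp (-s) with hy_def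
  have hy : ‖((y ^ 2 : ℝ) : ℂ)‖ < 1 := by
    rw [norm_real, Real.norm_of_nonneg (by positivity)]
    exact Real.exp_neg_sq_lt_one hs
  have hterm : (fun k : ℕ => exp (I * ((Real.pi * k * (k + 1) / 2 : ℝ) : ℂ)) *
      exp (((-((2 * k + 1 : ℝ)) * s : ℝ)) : ℂ)) =
      fun k : ℕ => (y : ℂ) *
        (exp (I * ((Real.pi * k * (k + 1) / 2 : ℝ) : ℂ)) * ((y ^ 2 : ℝ) : ℂ) ^ k) := by
    funext k
    rw [← ofReal_exp, Real.exp_neg_two_mul_add_one_mul, ofReal_mul, ofReal_pow]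
    ring
  have ha0 : exp (I * ((Real.pi * (0 : ℕ) * ((0 : ℕ) + 1) / 2 : ℝ) : ℂ)) = 1 := by simp
  have ha1 : exp (I * ((Real.pi * (1 : ℕ) * ((1 : ℕ) + 1) / 2 : ℝ) : ℂ)) = -1 := by
    norm_num [mul_comm I, exp_pi_mul_I]
  have hsum := (hasSum_mul_pow_of_antiperiodic exp_I_mul_pi_triangular_antiperiodic hy).mul_left
    (y : ℂ)
  rw [ha0, ha1] at hsum
  have hval : ((Real.sinh s / Real.cosh (2 * s) : ℝ) : ℂ) =
      (y : ℂ) * ((1 + -1 * ((y ^ 2 : ℝ) : ℂ)) / (1 + ((y ^ 2 : ℝ) : ℂ) ^ 2)) := by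
    rw [Real.sinh_div_cosh_two_mul, ← hy_def]
    simp only [ofReal_mul, ofReal_div, ofReal_sub, ofReal_add, ofReal_one, ofReal_pow]
    ring
  rw [hterm, hval]
  exact hsum

theorem neg_one_pow_mul_exp_mul_exp_odd_sq (k : ℕ) :
    (-1 : ℂ) ^ k * exp (-I * ((Real.pi * (2 * k + 1) / 2 : ℝ) : ℂ)) *
        exp (I * ((Real.pi * (2 * k + 1 : ℝ) ^ 2 / 8 : ℝ) : ℂ)) =
      -I * exp (I * ((Real.pi / 8 : ℝ) : ℂ)) * exp (I * ((Real.pi * k * (k + 1) / 2 : ℝ) : ℂ)) := by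
  have harg : -I * ((Real.pi * (2 * k + 1) / 2 : ℝ) : ℂ) +
      I * ((Real.pi * (2 * k + 1 : ℝ) ^ 2 / 8 : ℝ) : ℂ) =
        k * -(Real.pi * I) + -(Real.pi / 2 * I) + I * ((Real.pi / 8 : ℝ) : ℂ)
        + I * ((Real.pi * k * (k + 1) / 2 : ℝ) : ℂ) := by
    push_cast; ring
  have hsq : (-1 : ℂ) ^ k * (-1) ^ k = 1 := by rw [← mul_pow]; norm_num
  rw [mul_assoc, ← exp_add, harg, exp_add, exp_add, exp_add, exp_nat_mul, exp_neg_pi_mul_I,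
    exp_neg, exp_pi_div_two_mul_I, inv_I]
  linear_combination (-I * exp (I * ((Real.pi / 8 : ℝ) : ℂ)) *
    exp (I * ((Real.pi * k * (k + 1) / 2 : ℝ) : ℂ))) * hsq

/-- Equation (C10): for `s > 0`, the absolutely convergent series
`Σ_{k=0}^∞ e^{iπk(k+1)/2} e^{−(2k+1)s} = sinh(s)/cosh(2s)`; equivalently, over
odd `α = 2k+1`,
`Σ (−1)^{(α−1)/2} e^{−iπα/2} e^{iπα²/8} e^{−αs} = −i e^{iπ/8} sinh(s)/cosh(2s)`. -/
theorem statement16 (s : ℝ) (hs : 0 < s) :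
    Summable (fun k : ℕ =>
      ‖Complex.exp (Complex.I * ((Real.pi * k * (k + 1) / 2 : ℝ) : ℂ)) *
        Complex.exp ((( -((2 * k + 1 : ℝ)) * s : ℝ)) : ℂ)‖) ∧
    HasSum (fun k : ℕ =>
        Complex.exp (Complex.I * ((Real.pi * k * (k + 1) / 2 : ℝ) : ℂ)) *
          Complex.exp ((( -((2 * k + 1 : ℝ)) * s : ℝ)) : ℂ))
      ((Real.sinh s / Real.cosh (2 * s) : ℝ) : ℂ) ∧
    HasSum (fun k : ℕ =>
        (-1 : ℂ) ^ k *
          Complex.exp (-Complex.I * ((Real.pi * (2 * k + 1) / 2 : ℝ) : ℂ)) *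
          Complex.exp (Complex.I * ((Real.pi * (2 * k + 1 : ℝ) ^ 2 / 8 : ℝ) : ℂ)) *
          Complex.exp ((( -((2 * k + 1 : ℝ)) * s : ℝ)) : ℂ))
      (-Complex.I * Complex.exp (Complex.I * ((Real.pi / 8 : ℝ) : ℂ)) *
        ((Real.sinh s / Real.cosh (2 * s) : ℝ) : ℂ)) := by
  have hsum := hasSum_exp_I_mul_pi_triangular_mul_exp hs
  refine ⟨?_, hsum, ?_⟩
  · simp only [norm_mul, norm_exp_I_mul_ofReal, one_mul, norm_exp_ofReal,
      Real.exp_neg_two_mul_add_one_mul]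
    exact (summable_geometric_of_lt_one (by positivity) (Real.exp_neg_sq_lt_one hs)).mul_left _
  · simp_rw [neg_one_pow_mul_exp_mul_exp_odd_sq, mul_assoc (-I * _)]
    exact hsum.mul_left _
end

section
/- For all real t and real α, the absolutely convergent integrals satisfy ∫_0^1 e^{iπα²x/4}·exp(i(t/2)·log((1 − x)/x))·(x(1 − x))^{−1/4} dx = B + e^{iπα²/4}·conj(B), where B = ∫_1^∞ exp(iπα²/(4(w + 1)) + i(t/2)·log w)·w^{−1/4}·(w + 1)^{−3/2} dw and conj denotes complex conjugation. -/
/-!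
Split `(0, 1)` at `1/2`. On `(0, 1/2)` the substitution `x = 1/(w + 1)`, `w ∈ (1, ∞)`, turns
the integrand, Jacobian `(w + 1)⁻²` included, into the integrand of `B`. The reflection
`x ↦ 1 - x` exchanges the two halves; it fixes `x(1 - x)`, inverts `(1 - x)/x` and shifts the
phase `πα²x/4` to `πα²/4 - πα²x/4`, so it sends the integrand to `e^{iπα²/4}` times its
conjugate, and the upper half contributes `e^{iπα²/4}·conj(B)`.
-/
open MeasureTheory Set
open scoped ComplexConjugate

lemma IntegrableOn.Ioo_of_adjacent {E : Type*} [NormedAddCommGroup E] {f : ℝ → E} {a b c : ℝ}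
    (hab : a ≤ b) (hbc : b ≤ c) (h₁ : IntegrableOn f (Ioo a b))
    (h₂ : IntegrableOn f (Ioo b c)) : IntegrableOn f (Ioo a c) := by
  rw [← intervalIntegrable_iff_integrableOn_Ioo_of_le (hab.trans hbc)]
  exact ((intervalIntegrable_iff_integrableOn_Ioo_of_le hab).2 h₁).trans
    ((intervalIntegrable_iff_integrableOn_Ioo_of_le hbc).2 h₂)

lemma setIntegral_Ioo_add_adjacent {E : Type*} [NormedAddCommGroup E] [NormedSpace ℝ E]
    {f : ℝ → E} {a b c : ℝ} (hab : a ≤ b) (hbc : b ≤ c) (h₁ : IntegrableOn f (Ioo a b))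
    (h₂ : IntegrableOn f (Ioo b c)) :
    (∫ x in Ioo a b, f x) + ∫ x in Ioo b c, f x = ∫ x in Ioo a c, f x := by
  simp only [← integral_Ioc_eq_integral_Ioo, ← intervalIntegral.integral_of_le, hab, hbc,
    hab.trans hbc]
  exact intervalIntegral.integral_add_adjacent_intervals
    ((intervalIntegrable_iff_integrableOn_Ioo_of_le hab).2 h₁)
    ((intervalIntegrable_iff_integrableOn_Ioo_of_le hbc).2 h₂)

section ChangeOfVariables

variable {E : Type*} [NormedAddCommGroup E] [NormedSpace ℝ E]

lemma image_inv_add_one_Ioi_one : (fun w : ℝ => (w + 1)⁻¹) '' Ioi 1 = Ioo 0 (1 / 2) := by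
  rw [← image_image (·⁻¹) (· + 1), image_add_const_Ioi, image_inv_eq_inv,
    inv_Ioi₀ (by norm_num)]
  norm_num

lemma hasDerivWithinAt_inv_add_one {w : ℝ} (hw : w ∈ Ioi (1 : ℝ)) :
    HasDerivWithinAt (fun w : ℝ => (w + 1)⁻¹) (-((w + 1) ^ 2)⁻¹) (Ioi 1) w := by
  have h1 : w + 1 ≠ 0 := by simp only [mem_Ioi] at hw; positivity
  have h := ((hasDerivAt_id w).add_const 1).inv h1
  simp only [id] at h
  exact h.hasDerivWithinAt.congr_deriv (by ring)

lemma injOn_inv_add_one : InjOn (fun w : ℝ => (w + 1)⁻¹) (Ioi 1) :=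
  fun _ _ _ _ h => add_right_cancel (inv_injective h)

lemma integrableOn_Ioo_zero_half_iff (g : ℝ → E) :
    IntegrableOn g (Ioo 0 (1 / 2)) ↔
      IntegrableOn (fun w => ((w + 1) ^ 2)⁻¹ • g (w + 1)⁻¹) (Ioi 1) := by
  rw [← image_inv_add_one_Ioi_one, integrableOn_image_iff_integrableOn_abs_deriv_smul
    measurableSet_Ioi (fun w hw => hasDerivWithinAt_inv_add_one hw) injOn_inv_add_one]
  simp only [abs_neg, abs_inv, abs_pow, sq_abs]

lemma setIntegral_Ioo_zero_half_eq (g : ℝ → E) :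
    ∫ x in Ioo 0 (1 / 2), g x = ∫ w in Ioi 1, ((w + 1) ^ 2)⁻¹ • g (w + 1)⁻¹ := by
  rw [← image_inv_add_one_Ioi_one, integral_image_eq_integral_abs_deriv_smul
    measurableSet_Ioi (fun w hw => hasDerivWithinAt_inv_add_one hw) injOn_inv_add_one]
  simp only [abs_neg, abs_inv, abs_pow, sq_abs]

lemma image_one_sub_Ioo_zero_half : (fun x : ℝ => 1 - x) '' Ioo 0 (1 / 2) = Ioo (1 / 2) 1 := by
  rw [image_const_sub_Ioo]
  norm_num

lemma hasDerivWithinAt_one_sub (s : Set ℝ) (x : ℝ) :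
    HasDerivWithinAt (fun x : ℝ => 1 - x) (-1) s x :=
  ((hasDerivAt_id x).const_sub 1).hasDerivWithinAt

lemma integrableOn_Ioo_half_one_iff (g : ℝ → E) :
    IntegrableOn g (Ioo (1 / 2) 1) ↔ IntegrableOn (fun x => g (1 - x)) (Ioo 0 (1 / 2)) := by
  rw [← image_one_sub_Ioo_zero_half, integrableOn_image_iff_integrableOn_abs_deriv_smul
    measurableSet_Ioo (fun x _ => hasDerivWithinAt_one_sub _ x) sub_right_injective.injOn]
  simp only [abs_neg, abs_one, one_smul]

lemma setIntegral_Ioo_half_one_eq (g : ℝ → E) :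
    ∫ x in Ioo (1 / 2) 1, g x = ∫ x in Ioo 0 (1 / 2), g (1 - x) := by
  rw [← image_one_sub_Ioo_zero_half, integral_image_eq_integral_abs_deriv_smul
    measurableSet_Ioo (fun x _ => hasDerivWithinAt_one_sub _ x) sub_right_injective.injOn]
  simp only [abs_neg, abs_one, one_smul]

end ChangeOfVariables

noncomputable def eulerIntegrand (t α x : ℝ) : ℂ :=
  Complex.exp (Complex.I * ((Real.pi * α ^ 2 * x / 4 : ℝ) : ℂ)) *
    Complex.exp (Complex.I * ((t / 2 * Real.log ((1 - x) / x) : ℝ) : ℂ)) *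
    (((x * (1 - x)) ^ (-(1 : ℝ) / 4) : ℝ) : ℂ)

noncomputable def tailIntegrand (t α w : ℝ) : ℂ :=
  Complex.exp (Complex.I * ((Real.pi * α ^ 2 / (4 * (w + 1)) + t / 2 * Real.log w : ℝ) : ℂ)) *
    (((w ^ (-(1 : ℝ) / 4) * (w + 1) ^ (-(3 : ℝ) / 2) : ℝ)) : ℂ)

lemma continuousOn_tailIntegrand (t α : ℝ) : ContinuousOn (tailIntegrand t α) (Ioi 0) := by
  unfold tailIntegrand
  fun_prop (disch := intro w hw; simp only [mem_Ioi] at hw; positivity)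

lemma norm_tailIntegrand_le (t α : ℝ) {w : ℝ} (hw : 0 < w) :
    ‖tailIntegrand t α w‖ ≤ w ^ (-(7 : ℝ) / 4) := by
  rw [tailIntegrand, norm_mul, Complex.norm_exp_I_mul_ofReal, one_mul, Complex.norm_real,
    Real.norm_of_nonneg (by positivity)]
  calc w ^ (-(1 : ℝ) / 4) * (w + 1) ^ (-(3 : ℝ) / 2)
      ≤ w ^ (-(1 : ℝ) / 4) * w ^ (-(3 : ℝ) / 2) := by
        refine mul_le_mul_of_nonneg_left ?_ (by positivity)
        exact Real.rpow_le_rpow_of_nonpos hw (by linarith) (by norm_num)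
    _ = w ^ (-(7 : ℝ) / 4) := by rw [← Real.rpow_add hw]; norm_num

lemma eulerIntegrand_one_sub (t α x : ℝ) :
    eulerIntegrand t α (1 - x) =
      Complex.exp (Complex.I * ((Real.pi * α ^ 2 / 4 : ℝ) : ℂ)) *
        conj (eulerIntegrand t α x) := by
  have hlog : Real.log (x / (1 - x)) = -Real.log ((1 - x) / x) := by
    rw [← inv_div, Real.log_inv]
  simp only [eulerIntegrand, map_mul, ← Complex.exp_conj, Complex.conj_I, Complex.conj_ofReal,
    sub_sub_cancel, hlog, mul_comm (1 - x) x]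
  rw [← mul_assoc, ← mul_assoc]
  congr 1
  rw [← Complex.exp_add, ← Complex.exp_add, ← Complex.exp_add]
  congr 1
  push_cast
  ring

lemma sq_inv_mul_rpow_inv_add_one {w : ℝ} (hw : 0 < w) :
    ((w + 1) ^ 2)⁻¹ * ((w + 1)⁻¹ * (1 - (w + 1)⁻¹)) ^ (-(1 : ℝ) / 4)
      = w ^ (-(1 : ℝ) / 4) * (w + 1) ^ (-(3 : ℝ) / 2) := by
  have h1 : 0 < w + 1 := by linarith
  have hx : (w + 1)⁻¹ * (1 - (w + 1)⁻¹) = w * (w + 1) ^ (-2 : ℝ) := by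
    rw [Real.rpow_neg h1.le]; norm_cast; field_simp; ring
  rw [hx, Real.mul_rpow hw.le (by positivity), ← Real.rpow_mul h1.le,
    show (-(3 : ℝ) / 2) = -2 + (-2) * (-1 / 4) by norm_num, Real.rpow_add h1,
    Real.rpow_neg h1.le]
  norm_cast
  ring

lemma eulerIntegrand_inv_add_one (t α : ℝ) {w : ℝ} (hw : 0 < w) :
    ((w + 1) ^ 2)⁻¹ • eulerIntegrand t α (w + 1)⁻¹ = tailIntegrand t α w := by
  have h1 : 0 < w + 1 := by linarith
  have hratio : (1 - (w + 1)⁻¹) / (w + 1)⁻¹ = w := by field_simp; ring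
  have hphase : Real.pi * α ^ 2 * (w + 1)⁻¹ / 4 = Real.pi * α ^ 2 / (4 * (w + 1)) := by
    field_simp
  rw [eulerIntegrand, tailIntegrand, hratio, hphase, Complex.real_smul,
    ← sq_inv_mul_rpow_inv_add_one hw, Complex.ofReal_add, mul_add Complex.I, Complex.exp_add]
  push_cast
  ring

lemma integrableOn_tailIntegrand (t α : ℝ) : IntegrableOn (tailIntegrand t α) (Ioi 1) := by
  refine Integrable.mono'
    (integrableOn_Ioi_rpow_of_lt (a := -(7 : ℝ) / 4) (by norm_num) one_pos)
    (((continuousOn_tailIntegrand t α).mono fun w (hw : 1 < w) => zero_lt_one.trans hw)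
      |>.aestronglyMeasurable measurableSet_Ioi) ?_
  filter_upwards [ae_restrict_mem measurableSet_Ioi] with w (hw : 1 < w)
  exact norm_tailIntegrand_le t α (zero_lt_one.trans hw)

lemma integrableOn_eulerIntegrand_Ioo_zero_half (t α : ℝ) :
    IntegrableOn (eulerIntegrand t α) (Ioo 0 (1 / 2)) :=
  (integrableOn_Ioo_zero_half_iff _).2 <| (integrableOn_tailIntegrand t α).congr_fun
    (fun w (hw : 1 < w) => (eulerIntegrand_inv_add_one t α (zero_lt_one.trans hw)).symm)
    measurableSet_Ioi

lemma setIntegral_eulerIntegrand_Ioo_zero_half (t α : ℝ) :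
    ∫ x in Ioo 0 (1 / 2), eulerIntegrand t α x = ∫ w in Ioi 1, tailIntegrand t α w := by
  rw [setIntegral_Ioo_zero_half_eq]
  exact setIntegral_congr_fun measurableSet_Ioi fun w (hw : 1 < w) =>
    eulerIntegrand_inv_add_one t α (zero_lt_one.trans hw)

lemma integrableOn_eulerIntegrand_Ioo_half_one (t α : ℝ) :
    IntegrableOn (eulerIntegrand t α) (Ioo (1 / 2) 1) := by
  rw [integrableOn_Ioo_half_one_iff]
  simp only [eulerIntegrand_one_sub]
  exact (Complex.conjLIE.integrable_comp_iff.2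
    (integrableOn_eulerIntegrand_Ioo_zero_half t α)).const_mul _

lemma setIntegral_eulerIntegrand_Ioo_half_one (t α : ℝ) :
    ∫ x in Ioo (1 / 2) 1, eulerIntegrand t α x =
      Complex.exp (Complex.I * ((Real.pi * α ^ 2 / 4 : ℝ) : ℂ)) *
        conj (∫ x in Ioo 0 (1 / 2), eulerIntegrand t α x) := by
  simp only [setIntegral_Ioo_half_one_eq, eulerIntegrand_one_sub, integral_const_mul,
    integral_conj]

/-- Equations (A43)–(A44): Euler's integral over `(0,1)` equals `B + e^{iπα²/4}·conj(B)`,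
where `B` is the integral over `(1,∞)`. -/
theorem statement18 (t α : ℝ) :
    IntegrableOn (fun x : ℝ =>
        Complex.exp (Complex.I * ((Real.pi * α ^ 2 * x / 4 : ℝ) : ℂ)) *
          Complex.exp (Complex.I * ((t / 2 * Real.log ((1 - x) / x) : ℝ) : ℂ)) *
          (((x * (1 - x)) ^ (-(1 : ℝ) / 4) : ℝ) : ℂ)) (Set.Ioo 0 1) ∧
    IntegrableOn (fun w : ℝ =>
        Complex.exp (Complex.I * ((Real.pi * α ^ 2 / (4 * (w + 1)) + t / 2 * Real.log w : ℝ) : ℂ)) *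
          (((w ^ (-(1 : ℝ) / 4) * (w + 1) ^ (-(3 : ℝ) / 2) : ℝ)) : ℂ)) (Set.Ioi 1) ∧
    (∫ x in Set.Ioo (0 : ℝ) 1,
        Complex.exp (Complex.I * ((Real.pi * α ^ 2 * x / 4 : ℝ) : ℂ)) *
          Complex.exp (Complex.I * ((t / 2 * Real.log ((1 - x) / x) : ℝ) : ℂ)) *
          (((x * (1 - x)) ^ (-(1 : ℝ) / 4) : ℝ) : ℂ))
      = (∫ w in Set.Ioi (1 : ℝ),
          Complex.exp (Complex.I * ((Real.pi * α ^ 2 / (4 * (w + 1)) + t / 2 * Real.log w : ℝ) : ℂ)) *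
            (((w ^ (-(1 : ℝ) / 4) * (w + 1) ^ (-(3 : ℝ) / 2) : ℝ)) : ℂ)) +
        Complex.exp (Complex.I * ((Real.pi * α ^ 2 / 4 : ℝ) : ℂ)) *
          (starRingEnd ℂ) (∫ w in Set.Ioi (1 : ℝ),
            Complex.exp (Complex.I * ((Real.pi * α ^ 2 / (4 * (w + 1)) + t / 2 * Real.log w : ℝ) : ℂ)) *
              (((w ^ (-(1 : ℝ) / 4) * (w + 1) ^ (-(3 : ℝ) / 2) : ℝ)) : ℂ)) := by
  change IntegrableOn (eulerIntegrand t α) _ ∧ IntegrableOn (tailIntegrand t α) _ ∧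
    ∫ x in Ioo 0 1, eulerIntegrand t α x =
      (∫ w in Ioi 1, tailIntegrand t α w) + _ * conj (∫ w in Ioi 1, tailIntegrand t α w)
  have hlow := integrableOn_eulerIntegrand_Ioo_zero_half t α
  have hhigh := integrableOn_eulerIntegrand_Ioo_half_one t α
  refine ⟨IntegrableOn.Ioo_of_adjacent (by norm_num) (by norm_num) hlow hhigh,
    integrableOn_tailIntegrand t α, ?_⟩
  rw [← setIntegral_Ioo_add_adjacent (by norm_num) (by norm_num) hlow hhigh,
    setIntegral_eulerIntegrand_Ioo_half_one, setIntegral_eulerIntegrand_Ioo_zero_half]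
end
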